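/- Let S be a finite bichromatic point set and S' ⊆ S a subset that contains all points participating in S (S' conforms with S). Then: (1) an axis-aligned box B is safe for S if and only if it is safe for S'; and (2) a point p ∈ S' participates in S if and only if it participates in S'. -/

import Mathlib

open Classical

noncomputable section

abbrev Pt := ℝ × ℝ

/-- An axis-aligned box in the plane. -/
structure Box where
  x0 : ℝ
  x1 : ℝ
  y0 : ℝ
  y1 : ℝ
  hx : x0 < x1
  hy : y0 < y1

/-- The cross of a box: the union of its vertical and horizontal strips. -/
def Box.cross (B : Box) : Set Pt :=
  {p | (B.x0 ≤ p.1 ∧ p.1 ≤ B.x1) ∨ (B.y0 ≤ p.2 ∧ p.2 ≤ B.y1)}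

/-- The four open quadrants of a box. -/
def Box.NE (B : Box) : Set Pt := {p | B.x1 < p.1 ∧ B.y1 < p.2}
def Box.NW (B : Box) : Set Pt := {p | p.1 < B.x0 ∧ B.y1 < p.2}
def Box.SE (B : Box) : Set Pt := {p | B.x1 < p.1 ∧ p.2 < B.y0}
def Box.SW (B : Box) : Set Pt := {p | p.1 < B.x0 ∧ p.2 < B.y0}

/-- Membership in the open interior of a box. -/
def Box.inside (B : Box) (p : Pt) : Prop :=
  B.x0 < p.1 ∧ p.1 < B.x1 ∧ B.y0 < p.2 ∧ p.2 < B.y1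

/-- Membership in the closed box. -/
def Box.memClosed (B : Box) (p : Pt) : Prop :=
  B.x0 ≤ p.1 ∧ p.1 ≤ B.x1 ∧ B.y0 ≤ p.2 ∧ p.2 ≤ B.y1

/-- `p` avoids the boundary lines of the box and of its quadrants. -/
def Box.offBoundary (B : Box) (p : Pt) : Prop :=
  p.1 ≠ B.x0 ∧ p.1 ≠ B.x1 ∧ p.2 ≠ B.y0 ∧ p.2 ≠ B.y1

/-- Minimal points of `T` towards the SW corner of the NE quadrant
(the usual minimal points under coordinatewise domination). -/
def neMinSet (T : Set Pt) : Set Pt :=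
  {p ∈ T | ∀ q ∈ T, (q.1 ≤ p.1 ∧ q.2 ≤ p.2) → q = p}

/-- Minimal points of `T` towards the SE corner of the NW quadrant. -/
def nwMinSet (T : Set Pt) : Set Pt :=
  {p ∈ T | ∀ q ∈ T, (p.1 ≤ q.1 ∧ q.2 ≤ p.2) → q = p}

/-- Minimal points of `T` towards the NW corner of the SE quadrant. -/
def seMinSet (T : Set Pt) : Set Pt :=
  {p ∈ T | ∀ q ∈ T, (q.1 ≤ p.1 ∧ p.2 ≤ q.2) → q = p}

/-- Minimal points of `T` towards the NE corner of the SW quadrant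
(the usual maximal points under coordinatewise domination). -/
def swMinSet (T : Set Pt) : Set Pt :=
  {p ∈ T | ∀ q ∈ T, (p.1 ≤ q.1 ∧ p.2 ≤ q.2) → q = p}

/-- `z` lies in the open axis-aligned rectangle spanned by `p` and `q`. -/
def openRect (p q z : Pt) : Prop :=
  min p.1 q.1 < z.1 ∧ z.1 < max p.1 q.1 ∧ min p.2 q.2 < z.2 ∧ z.2 < max p.2 q.2

/-- `p` and `q` see each other in `S`: the open rectangle they span is empty of `S`. -/
def sees (S : Set Pt) (p q : Pt) : Prop := ∀ z ∈ S, ¬ openRect p q z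

/-- `p` participates in `S`: some point of the opposite color sees `p`. -/
def participates (S : Set Pt) (color : Pt → Bool) (p : Pt) : Prop :=
  ∃ q ∈ S, color q ≠ color p ∧ sees S p q

/-- All points of `S` in the cross of `B` have color `c`. -/
def crossSafeFor (S : Set Pt) (color : Pt → Bool) (c : Bool) (B : Box) : Prop :=
  ∀ p ∈ S, p ∈ B.cross → color p = c

/-- `B` is `c`-safe for `S`: `c`-cross-safe and the four directional minimal
sets of the quadrants only contain points of color `c`. -/
def safeFor (S : Set Pt) (color : Pt → Bool) (c : Bool) (B : Box) : Prop :=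
  crossSafeFor S color c B ∧
  (∀ p ∈ neMinSet (S ∩ B.NE), color p = c) ∧
  (∀ p ∈ nwMinSet (S ∩ B.NW), color p = c) ∧
  (∀ p ∈ seMinSet (S ∩ B.SE), color p = c) ∧
  (∀ p ∈ swMinSet (S ∩ B.SW), color p = c)

/-- `B` is safe: red-safe (`true`) or blue-safe (`false`). -/
def isSafe (S : Set Pt) (color : Pt → Bool) (B : Box) : Prop :=
  safeFor S color true B ∨ safeFor S color false B

/-- General position: pairwise distinct x-coordinates and y-coordinates. -/
def genPos (S : Set Pt) : Prop :=
  ∀ p ∈ S, ∀ q ∈ S, p ≠ q → p.1 ≠ q.1 ∧ p.2 ≠ q.2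

/-!
Say that `p` sees the box `B` in `T` if it sees the point of `B` nearest to it. In general
position, `B` is `c`-safe exactly when every point of `T` that sees `B` has colour `c`: in the
cross every point sees `B`, in a quadrant exactly the points of its minimal set do.

Two points of different colours span a rectangle; recursing into a point inside it while keeping
one endpoint of each colour ends at a bichromatic pair that see each other. Seeing `B` survives
this recursion, since a rectangle spanned by two points seeing `B` that contains a point of `S`
contains one seeing `B`. Hence a point of `S'` that sees `B` in `S'` but not in `S` is blocked by
a point of `S \ S'` that sees `B` and, by the recursion, participates, which is absurd; and a
bichromatic pair seeing `B` in `S` produces participating, hence conforming, points of both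
colours seeing `B`.
-/

open Set

section ProjIcc

variable {α : Type*} [LinearOrder α] {a b : α}

theorem projIcc_eq_of_mem_uIoo (h : a ≤ b) {s t : α} (hs : s ∈ uIoo t (projIcc a b h t)) :
    projIcc a b h s = projIcc a b h t := by
  simp only [uIoo, coe_projIcc, mem_Ioo] at hs
  ext
  simp only [coe_projIcc]
  grind

theorem mem_uIoo_projIcc_of_mem_uIoo (h : a ≤ b) {p q w m : α} (hw : w ∈ uIoo p q)
    (hm : m ∈ uIoo w (projIcc a b h w)) :
    m ∈ uIoo p (projIcc a b h p) ∨ m ∈ uIoo q (projIcc a b h q) := by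
  simp only [uIoo, coe_projIcc, mem_Ioo] at *
  grind

theorem mem_uIoo_of_mem_uIoo_projIcc (h : a ≤ b) {p q m : α} (hp : m ∈ uIoo p (projIcc a b h p))
    (hq : m ∉ uIoo q (projIcc a b h q)) (hmq : m ≠ q) : m ∈ uIoo p q := by
  simp only [uIoo, coe_projIcc, mem_Ioo] at *
  grind

end ProjIcc

theorem openRect_iff {p q z : Pt} : openRect p q z ↔ z.1 ∈ uIoo p.1 q.1 ∧ z.2 ∈ uIoo p.2 q.2 := by
  simp only [openRect, uIoo, mem_Ioo, and_assoc]

theorem openRect_comm {p q z : Pt} : openRect p q z ↔ openRect q p z := by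
  simp only [openRect_iff, uIoo_comm]

theorem not_openRect_left (p q : Pt) : ¬ openRect p q p := by
  simp [openRect_iff]

theorem not_openRect_right (p q : Pt) : ¬ openRect p q q := by
  simp [openRect_iff]

theorem openRect_subset_left {p q z u : Pt} (hz : openRect p q z) (hu : openRect p z u) :
    openRect p q u := by
  rw [openRect_iff] at *
  exact ⟨uIoo_subset_Ioo ⟨inf_le_left, le_sup_left⟩ (Ioo_subset_Icc_self hz.1) hu.1,
    uIoo_subset_Ioo ⟨inf_le_left, le_sup_left⟩ (Ioo_subset_Icc_self hz.2) hu.2⟩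

theorem openRect_subset_right {p q z u : Pt} (hz : openRect p q z) (hu : openRect z q u) :
    openRect p q u :=
  openRect_comm.2 (openRect_subset_left (openRect_comm.1 hz) (openRect_comm.1 hu))

theorem sees.mono {T T' : Set Pt} (hT : T' ⊆ T) {p q : Pt} (h : sees T p q) : sees T' p q :=
  fun z hz => h z (hT hz)

theorem sees.symm {T : Set Pt} {p q : Pt} (h : sees T p q) : sees T q p :=
  fun z hz hr => h z hz (openRect_comm.1 hr)

theorem genPos.mono {T T' : Set Pt} (hT : T' ⊆ T) (h : genPos T) : genPos T' :=
  fun p hp q hq => h p (hT hp) q (hT hq)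

def Box.nearest (B : Box) (p : Pt) : Pt :=
  (projIcc B.x0 B.x1 B.hx.le p.1, projIcc B.y0 B.y1 B.hy.le p.2)

theorem Box.nearest_eq_of_openRect {B : Box} {p z : Pt} (hz : openRect p (B.nearest p) z) :
    B.nearest z = B.nearest p := by
  rw [openRect_iff] at hz
  simp only [Box.nearest, projIcc_eq_of_mem_uIoo _ hz.1, projIcc_eq_of_mem_uIoo _ hz.2]

theorem Box.mem_cross_or_quadrant (B : Box) (p : Pt) :
    p ∈ B.cross ∨ p ∈ B.NE ∨ p ∈ B.NW ∨ p ∈ B.SE ∨ p ∈ B.SW := by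
  simp only [Box.cross, Box.NE, Box.NW, Box.SE, Box.SW, mem_ofPred_eq]
  grind

/-- Seeing the nearest point of `B` is the same as seeing some point of the closed box: the
rectangle spanned with the nearest point lies inside all the others. -/
def seesBox (T : Set Pt) (B : Box) (p : Pt) : Prop := sees T p (B.nearest p)

theorem seesBox_of_mem_cross {T : Set Pt} {B : Box} {p : Pt} (hp : p ∈ B.cross) :
    seesBox T B p := by
  intro z _ hz
  rw [openRect_iff] at hz
  rcases hp with hx | hy
  · simpa [Box.nearest, projIcc_of_mem _ hx] using hz.1
  · simpa [Box.nearest, projIcc_of_mem _ hy] using hz.2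

section Quadrants

variable {T : Set Pt} {B : Box} {p : Pt}

theorem mem_neMinSet_iff (hT : genPos T) (hp : p ∈ T ∩ B.NE) :
    p ∈ neMinSet (T ∩ B.NE) ↔ seesBox T B p := by
  obtain ⟨hpT, hx, hy⟩ := hp
  simp only [neMinSet, seesBox, sees, Box.nearest, projIcc_of_right_le _ hx.le,
    projIcc_of_right_le _ hy.le, openRect, Box.NE, mem_inter_iff, mem_ofPred_eq]
  grind [genPos]

theorem mem_nwMinSet_iff (hT : genPos T) (hp : p ∈ T ∩ B.NW) :
    p ∈ nwMinSet (T ∩ B.NW) ↔ seesBox T B p := by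
  obtain ⟨hpT, hx, hy⟩ := hp
  simp only [nwMinSet, seesBox, sees, Box.nearest, projIcc_of_le_left _ hx.le,
    projIcc_of_right_le _ hy.le, openRect, Box.NW, mem_inter_iff, mem_ofPred_eq]
  grind [genPos]

theorem mem_seMinSet_iff (hT : genPos T) (hp : p ∈ T ∩ B.SE) :
    p ∈ seMinSet (T ∩ B.SE) ↔ seesBox T B p := by
  obtain ⟨hpT, hx, hy⟩ := hp
  simp only [seMinSet, seesBox, sees, Box.nearest, projIcc_of_right_le _ hx.le,
    projIcc_of_le_left _ hy.le, openRect, Box.SE, mem_inter_iff, mem_ofPred_eq]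
  grind [genPos]

theorem mem_swMinSet_iff (hT : genPos T) (hp : p ∈ T ∩ B.SW) :
    p ∈ swMinSet (T ∩ B.SW) ↔ seesBox T B p := by
  obtain ⟨hpT, hx, hy⟩ := hp
  simp only [swMinSet, seesBox, sees, Box.nearest, projIcc_of_le_left _ hx.le,
    projIcc_of_le_left _ hy.le, openRect, Box.SW, mem_inter_iff, mem_ofPred_eq]
  grind [genPos]

theorem safeFor_iff_forall_seesBox (hT : genPos T) {color : Pt → Bool} {c : Bool} :
    safeFor T color c B ↔ ∀ p ∈ T, seesBox T B p → color p = c := by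
  constructor
  · rintro ⟨hcross, hne, hnw, hse, hsw⟩ p hpT hp
    rcases B.mem_cross_or_quadrant p with h | h | h | h | h
    · exact hcross p hpT h
    · exact hne p ((mem_neMinSet_iff hT ⟨hpT, h⟩).2 hp)
    · exact hnw p ((mem_nwMinSet_iff hT ⟨hpT, h⟩).2 hp)
    · exact hse p ((mem_seMinSet_iff hT ⟨hpT, h⟩).2 hp)
    · exact hsw p ((mem_swMinSet_iff hT ⟨hpT, h⟩).2 hp)
  · intro h
    exact ⟨fun p hpT hp => h p hpT (seesBox_of_mem_cross hp),
      fun p hp => h p hp.1.1 ((mem_neMinSet_iff hT hp.1).1 hp),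
      fun p hp => h p hp.1.1 ((mem_nwMinSet_iff hT hp.1).1 hp),
      fun p hp => h p hp.1.1 ((mem_seMinSet_iff hT hp.1).1 hp),
      fun p hp => h p hp.1.1 ((mem_swMinSet_iff hT hp.1).1 hp)⟩

end Quadrants

theorem card_filter_openRect_lt {S : Finset Pt} {p q a b z : Pt}
    (hsub : ∀ u, openRect a b u → openRect p q u) (hz : z ∈ S) (hpqz : openRect p q z)
    (habz : ¬ openRect a b z) :
    (S.filter (openRect a b)).card < (S.filter (openRect p q)).card :=
  Finset.card_lt_card <|
    (Finset.ssubset_iff_of_subset (Finset.monotone_filter_right S fun u _ => hsub u)).2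
      ⟨z, Finset.mem_filter.2 ⟨hz, hpqz⟩, fun h => habz (Finset.mem_filter.1 h).2⟩

theorem exists_seesBox (S : Finset Pt) (B : Box) {w : Pt} (hw : w ∈ S) :
    ∃ m ∈ S, seesBox S B m ∧ (m = w ∨ openRect w (B.nearest w) m) := by
  induction hn : (S.filter (openRect w (B.nearest w))).card using Nat.strong_induction_on
    generalizing w with
  | _ n ih =>
  by_cases hwB : seesBox S B w
  · exact ⟨w, hw, hwB, Or.inl rfl⟩
  obtain ⟨z, hz, hwz⟩ : ∃ z ∈ S, openRect w (B.nearest w) z := by simpa [seesBox, sees] using hwB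
  have hsub : ∀ u, openRect z (B.nearest z) u → openRect w (B.nearest w) u := fun u hu =>
    openRect_subset_right hwz (B.nearest_eq_of_openRect hwz ▸ hu)
  obtain ⟨m, hm, hmB, hzm⟩ :=
    ih _ (hn ▸ card_filter_openRect_lt hsub hz hwz (not_openRect_left _ _)) hz rfl
  exact ⟨m, hm, hmB, Or.inr (hzm.elim (· ▸ hwz) (hsub m))⟩

theorem openRect_of_seesBox_of_mem_uIoo {S : Set Pt} (hS : genPos S) {B : Box} {p q m : Pt}
    (hp : p ∈ S) (hq : q ∈ S) (hm : m ∈ S) (hpB : seesBox S B p) (hqB : seesBox S B q)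
    (h1 : m.1 ∈ uIoo p.1 (B.nearest p).1) (h2 : m.2 ∈ uIoo q.2 (B.nearest q).2) :
    openRect p q m := by
  have hmp : m ≠ p := by rintro rfl; exact left_notMem_uIoo h1
  have hmq : m ≠ q := by rintro rfl; exact left_notMem_uIoo h2
  refine openRect_iff.2 ⟨mem_uIoo_of_mem_uIoo_projIcc B.hx.le h1
    (fun h => hqB m hm (openRect_iff.2 ⟨h, h2⟩)) (hS m hm q hq hmq).1, ?_⟩
  rw [uIoo_comm]
  exact mem_uIoo_of_mem_uIoo_projIcc B.hy.le h2
    (fun h => hpB m hm (openRect_iff.2 ⟨h1, h⟩)) (hS m hm p hp hmp).2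

theorem exists_seesBox_of_openRect {S : Finset Pt} (hS : genPos (S : Set Pt)) {B : Box}
    {p q w : Pt} (hp : p ∈ S) (hq : q ∈ S) (hpB : seesBox S B p) (hqB : seesBox S B q)
    (hw : w ∈ S) (hpqw : openRect p q w) : ∃ m ∈ S, seesBox S B m ∧ openRect p q m := by
  obtain ⟨m, hm, hmB, rfl | hwm⟩ := exists_seesBox S B hw
  · exact ⟨m, hm, hmB, hpqw⟩
  refine ⟨m, hm, hmB, ?_⟩
  -- in each coordinate `m` lies between `B` and `p` or between `B` and `q`; since neither `p` nor
  -- `q` is blocked by `m`, the two coordinates use different endpoints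
  rw [openRect_iff] at hpqw hwm
  rcases mem_uIoo_projIcc_of_mem_uIoo B.hx.le hpqw.1 hwm.1 with h1 | h1 <;>
  rcases mem_uIoo_projIcc_of_mem_uIoo B.hy.le hpqw.2 hwm.2 with h2 | h2
  · exact absurd (openRect_iff.2 ⟨h1, h2⟩) (hpB m hm)
  · exact openRect_of_seesBox_of_mem_uIoo hS hp hq hm hpB hqB h1 h2
  · exact openRect_comm.1 (openRect_of_seesBox_of_mem_uIoo hS hq hp hm hqB hpB h1 h2)
  · exact absurd (openRect_iff.2 ⟨h1, h2⟩) (hqB m hm)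

theorem exists_participates_of_color_ne {S : Finset Pt} (color : Pt → Bool) {P : Pt → Prop}
    (hP : ∀ a ∈ S, ∀ b ∈ S, P a → P b → ∀ w ∈ S, openRect a b w →
      ∃ z ∈ S, P z ∧ openRect a b z)
    {p q : Pt} (hp : p ∈ S) (hq : q ∈ S) (hPp : P p) (hPq : P q) (hpq : color p ≠ color q) :
    ∃ u ∈ S, P u ∧ color u = color p ∧ (u = p ∨ openRect p q u) ∧ participates S color u := by
  induction hn : (S.filter (openRect p q)).card using Nat.strong_induction_on
    generalizing p q with
  | _ n ih =>
  by_cases hsee : sees S p q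
  · exact ⟨p, hp, hPp, rfl, Or.inl rfl, q, hq, hpq.symm, hsee⟩
  obtain ⟨w, hw, hpqw⟩ : ∃ w ∈ S, openRect p q w := by simpa [sees] using hsee
  obtain ⟨z, hz, hPz, hpqz⟩ := hP p hp q hq hPp hPq w hw hpqw
  by_cases hcz : color z = color p
  · obtain ⟨u, hu, hPu, hcu, hzu, hpart⟩ := ih _ (hn ▸ card_filter_openRect_lt
      (fun _ => openRect_subset_right hpqz) hz hpqz (not_openRect_left z q))
      hz hq hPz hPq (hcz ▸ hpq) rfl
    exact ⟨u, hu, hPu, hcu.trans hcz,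
      Or.inr (hzu.elim (· ▸ hpqz) (openRect_subset_right hpqz)), hpart⟩
  · obtain ⟨u, hu, hPu, hcu, hpu, hpart⟩ := ih _ (hn ▸ card_filter_openRect_lt
      (fun _ => openRect_subset_left hpqz) hz hpqz (not_openRect_right p z))
      hp hz hPp hPz (Ne.symm hcz) rfl
    exact ⟨u, hu, hPu, hcu, hpu.imp_right (openRect_subset_left hpqz), hpart⟩

section Conforming

variable {S S' : Finset Pt} {color : Pt → Bool}

theorem participates_of_sees_of_conforms
    (hconf : ∀ p ∈ S, participates S color p → p ∈ S') {p q : Pt} (hp : p ∈ S) (hq : q ∈ S)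
    (hpq : color p ≠ color q) (hsees : sees S' p q) : participates S color p := by
  obtain ⟨u, hu, -, -, rfl | hpqu, hpart⟩ := exists_participates_of_color_ne color
    (P := fun _ => True) (fun _ _ _ _ _ _ w hw hpqw => ⟨w, hw, trivial, hpqw⟩)
    hp hq trivial trivial hpq
  · exact hpart
  · exact absurd hpqu (hsees u (hconf u hu hpart))

theorem safeFor_of_conforms (hS : genPos (S : Set Pt)) (hsub : S' ⊆ S)
    (hconf : ∀ p ∈ S, participates S color p → p ∈ S') {B : Box} {c : Bool}
    (h : safeFor S color c B) : safeFor S' color c B := by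
  rw [safeFor_iff_forall_seesBox hS] at h
  rw [safeFor_iff_forall_seesBox (hS.mono (Finset.coe_subset.2 hsub))]
  intro p hp hpB'
  by_cases hpB : seesBox S B p
  · exact h p (hsub hp) hpB
  obtain ⟨m, hm, hmB, rfl | hpm⟩ := exists_seesBox S B (hsub hp)
  · exact absurd hmB hpB
  by_contra hpc
  have hmp : color m ≠ color p := (h m hm hmB).trans_ne (Ne.symm hpc)
  have hmsees : sees S' m p := fun u hu hmpu =>
    hpB' u hu (openRect_subset_left hpm (openRect_comm.1 hmpu))
  exact hpB' m (hconf m hm (participates_of_sees_of_conforms hconf hm (hsub hp) hmp hmsees)) hpm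

theorem exists_seesBox_color_of_conforms (hS : genPos (S : Set Pt)) (hsub : S' ⊆ S)
    (hconf : ∀ p ∈ S, participates S color p → p ∈ S') {B : Box} {p q : Pt}
    (hp : p ∈ S) (hq : q ∈ S) (hpB : seesBox S B p) (hqB : seesBox S B q)
    (hpq : color p ≠ color q) : ∃ u ∈ S', seesBox S' B u ∧ color u = color p := by
  obtain ⟨u, hu, huB, hcu, -, hpart⟩ := exists_participates_of_color_ne color
    (fun _ ha _ hb haB hbB _ hw hw' => exists_seesBox_of_openRect hS ha hb haB hbB hw hw')
    hp hq hpB hqB hpq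
  exact ⟨u, hconf u hu hpart, huB.mono (Finset.coe_subset.2 hsub), hcu⟩

theorem isSafe_of_conforms (hS : genPos (S : Set Pt)) (hsub : S' ⊆ S)
    (hconf : ∀ p ∈ S, participates S color p → p ∈ S') {B : Box}
    (h : isSafe S' color B) : isSafe S color B := by
  have hS' := hS.mono (Finset.coe_subset.2 hsub)
  by_contra hns
  simp only [isSafe, not_or, safeFor_iff_forall_seesBox hS] at hns
  push Not at hns
  obtain ⟨⟨p, hp, hpB, hpc⟩, q, hq, hqB, hqc⟩ := hns
  have hpq : color p ≠ color q := by simp_all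
  obtain ⟨u, hu, huB, hcu⟩ := exists_seesBox_color_of_conforms hS hsub hconf hp hq hpB hqB hpq
  obtain ⟨v, hv, hvB, hcv⟩ :=
    exists_seesBox_color_of_conforms hS hsub hconf hq hp hqB hpB hpq.symm
  rw [isSafe, safeFor_iff_forall_seesBox hS', safeFor_iff_forall_seesBox hS'] at h
  rcases h with h | h
  · exact hpc (hcu.symm.trans (h u hu huB))
  · exact hqc (hcv.symm.trans (h v hv hvB))

theorem participates_iff_of_conforms (hsub : S' ⊆ S)
    (hconf : ∀ p ∈ S, participates S color p → p ∈ S') {p : Pt} (hp : p ∈ S') :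
    participates S color p ↔ participates S' color p := by
  constructor
  · rintro ⟨q, hq, hqp, hpq⟩
    exact ⟨q, hconf q hq ⟨p, hsub hp, hqp.symm, hpq.symm⟩, hqp,
      hpq.mono (Finset.coe_subset.2 hsub)⟩
  · rintro ⟨q, hq, hqp, hpq⟩
    exact participates_of_sees_of_conforms hconf (hsub hp) (hsub hq) hqp.symm hpq

end Conforming

theorem stmt8_general (S S' : Finset Pt) (color : Pt → Bool) (hgp : genPos (↑S : Set Pt))
    (hsub : S' ⊆ S)
    (hconf : ∀ p ∈ S, participates (↑S : Set Pt) color p → p ∈ S')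
    (B : Box) :
    (isSafe (↑S : Set Pt) color B ↔ isSafe (↑S' : Set Pt) color B) ∧
    (∀ p ∈ S', (participates (↑S : Set Pt) color p ↔ participates (↑S' : Set Pt) color p)) :=
  ⟨⟨fun h => h.imp (safeFor_of_conforms hgp hsub hconf) (safeFor_of_conforms hgp hsub hconf),
      isSafe_of_conforms hgp hsub hconf⟩,
    fun _ hp => participates_iff_of_conforms hsub hconf hp⟩

/-- If `S'` conforms with `S` (contains all participating points), then a box is safe
for `S` iff it is safe for `S'`, and points of `S'` participate in `S` iff in `S'`. -/
theorem stmt8 (S S' : Finset Pt) (color : Pt → Bool) (hgp : genPos (↑S : Set Pt))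
    (hsub : S' ⊆ S)
    (hconf : ∀ p ∈ S, participates (↑S : Set Pt) color p → p ∈ S')
    (B : Box) (hbd : ∀ q ∈ S, B.offBoundary q) :
    (isSafe (↑S : Set Pt) color B ↔ isSafe (↑S' : Set Pt) color B) ∧
    (∀ p ∈ S', (participates (↑S : Set Pt) color p ↔ participates (↑S' : Set Pt) color p)) :=
  stmt8_general S S' color hgp hsub hconf B
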